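/- arXiv:1210.0701 — 6 statements merged into one kernel-verified Lean document; each statement's English description precedes it below -/
import Mathlib

section
/- For fixed r ∈ ℝ and λ > 0, the minimum value over γ ∈ ℝ of (1/2)(r - γ)² + λ|γ| equals Huber's loss: (1/2)r² if |r| ≤ λ, and λ|r| - λ²/2 if |r| > λ. -/
/-!
Since `(r - γ)² ≥ (|r| - |γ|)²` and, for `t = |γ|`,
`(1/2)(|r| - t)² + λt = λ|r| - λ²/2 + (1/2)(|r| - t - λ)²`, the objective is at least
`λ|r| - λ²/2`, with equality at the soft-thresholded `γ = r ∓ λ` as soon as `λ < |r|`.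
If instead `|r| ≤ λ`, then `rγ ≤ |r||γ| ≤ λ|γ|` shows that `γ = 0` is optimal.
-/

open Set

noncomputable def huberLoss (lam r : ℝ) : ℝ :=
  if |r| ≤ lam then (1/2) * r^2 else lam * |r| - lam^2 / 2

noncomputable def penalizedLoss (lam r γ : ℝ) : ℝ := (1/2) * (r - γ)^2 + lam * |γ|

section

variable {lam r : ℝ}

lemma penalizedLoss_zero (lam r : ℝ) : penalizedLoss lam r 0 = (1/2) * r^2 := by
  simp [penalizedLoss]

lemma half_sq_le_penalizedLoss (h : |r| ≤ lam) (γ : ℝ) :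
    (1/2) * r^2 ≤ penalizedLoss lam r γ := by
  have hrγ : r * γ ≤ lam * |γ| :=
    calc r * γ ≤ |r| * |γ| := abs_mul r γ ▸ le_abs_self _
      _ ≤ lam * |γ| := mul_le_mul_of_nonneg_right h (abs_nonneg γ)
  unfold penalizedLoss
  nlinarith [sq_nonneg γ]

lemma linear_le_penalizedLoss (lam r γ : ℝ) :
    lam * |r| - lam^2 / 2 ≤ penalizedLoss lam r γ := by
  have hsq : (|r| - |γ|)^2 ≤ (r - γ)^2 := sq_le_sq.2 (abs_abs_sub_abs_le_abs_sub r γ)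
  calc lam * |r| - lam^2 / 2
      = (1/2) * (|r| - |γ|)^2 + lam * |γ| - (1/2) * (|r| - |γ| - lam)^2 := by ring
    _ ≤ (1/2) * (|r| - |γ|)^2 + lam * |γ| := by linarith [sq_nonneg (|r| - |γ| - lam)]
    _ ≤ penalizedLoss lam r γ := by unfold penalizedLoss; linarith

lemma exists_penalizedLoss_eq_of_lt_abs (h : lam < |r|) :
    ∃ γ, penalizedLoss lam r γ = lam * |r| - lam^2 / 2 := by
  rcases le_or_gt 0 r with hr | hr
  · rw [abs_of_nonneg hr] at h ⊢
    refine ⟨r - lam, ?_⟩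
    rw [penalizedLoss, abs_of_pos (sub_pos.2 h)]
    ring
  · rw [abs_of_neg hr] at h ⊢
    refine ⟨r + lam, ?_⟩
    rw [penalizedLoss, abs_of_neg (by linarith)]
    ring

theorem isLeast_range_penalizedLoss (lam r : ℝ) :
    IsLeast (range (penalizedLoss lam r)) (huberLoss lam r) := by
  unfold huberLoss
  split_ifs with h
  · exact ⟨⟨0, penalizedLoss_zero lam r⟩, forall_mem_range.2 (half_sq_le_penalizedLoss h)⟩
  · exact ⟨exists_penalizedLoss_eq_of_lt_abs (not_le.1 h),
      forall_mem_range.2 (linear_le_penalizedLoss lam r)⟩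

end

theorem effective_loss_is_huber_general (r lam : ℝ) :
    IsLeast {v : ℝ | ∃ γ : ℝ, v = (1/2) * (r - γ)^2 + lam * |γ|}
      (if |r| ≤ lam then (1/2) * r^2 else lam * |r| - lam^2 / 2) := by
  have hS : {v : ℝ | ∃ γ : ℝ, v = (1/2) * (r - γ)^2 + lam * |γ|} =
      range (penalizedLoss lam r) := by
    ext v
    exact exists_congr fun _ => eq_comm
  rw [hS]
  exact isLeast_range_penalizedLoss lam r

/-- The minimum over `γ` of `(1/2)(r - γ)² + λ|γ|` equals Huber's loss:
`(1/2)r²` if `|r| ≤ λ`, and `λ|r| - λ²/2` otherwise. -/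
theorem effective_loss_is_huber (r lam : ℝ) (hlam : 0 < lam) :
    IsLeast {v : ℝ | ∃ γ : ℝ, v = (1/2) * (r - γ)^2 + lam * |γ|}
      (if |r| ≤ lam then (1/2) * r^2 else lam * |r| - lam^2 / 2) :=
  effective_loss_is_huber_general r lam
end

section
/- Let g : ℝ → ℝ be differentiable and strictly convex with minimum at 0, and suppose g'(r) → ±∞ as r → ±∞. Then for any λ > 0 and r ∈ ℝ, the unique minimizer of γ ↦ g(r - γ) + λ|γ| equals r - (g')⁻¹(λ) when r > (g')⁻¹(λ), equals 0 when (g')⁻¹(-λ) ≤ r ≤ (g')⁻¹(λ), and equals r - (g')⁻¹(-λ) when r < (g')⁻¹(-λ). -/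
/-!
The tangent-line inequality for `g` at `r - γ̂` reduces minimality of `γ̂` to the first-order
condition that `g'(r - γ̂)` is a subgradient of `λ|·|` at `γ̂`: `|g'(r - γ̂)| ≤ λ`, with
`g'(r - γ̂) γ̂ = λ|γ̂|`. In the three regimes this is read off from `g'(a) = λ`, `g'(b) = -λ` and,
for `b ≤ r ≤ a`, from monotonicity of `g'`. Uniqueness follows from strict convexity of the
objective.
-/

open Set

section
variable {𝕜 E F β : Type*} [Field 𝕜] [LinearOrder 𝕜] [AddCommGroup E] [AddCommGroup F]
  [AddCommMonoid β] [PartialOrder β] [Module 𝕜 E] [Module 𝕜 F] [SMul 𝕜 β]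

theorem StrictConvexOn.comp_affineMap {f : F → β} (g : E →ᵃ[𝕜] F) (hg : Function.Injective g)
    {s : Set F} (hf : StrictConvexOn 𝕜 s f) : StrictConvexOn 𝕜 (g ⁻¹' s) (f ∘ g) :=
  ⟨hf.1.affine_preimage _, fun x hx y hy hxy a b ha hb hab =>
    calc
      (f ∘ g) (a • x + b • y) = f (a • g x + b • g y) := by
        rw [Function.comp_apply, Convex.combo_affine_apply hab]
      _ < a • f (g x) + b • f (g y) := hf.2 hx hy (hg.ne hxy) ha hb hab⟩
end

section
variable {𝕜 E β : Type*} [Field 𝕜] [LinearOrder 𝕜] [IsStrictOrderedRing 𝕜]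
  [AddCommMonoid β] [LinearOrder β] [IsOrderedAddMonoid β] [AddCommMonoid E] [SMul 𝕜 E]
  [Module 𝕜 β] [PosSMulMono 𝕜 β] {f : E → β} {s : Set E} {x y : E}

theorem StrictConvexOn.lt_of_isMinOn (hf : StrictConvexOn 𝕜 s f) (hfx : IsMinOn f s x)
    (hx : x ∈ s) (hy : y ∈ s) (hyx : y ≠ x) : f x < f y :=
  (hfx hy).lt_of_ne fun hxy =>
    hyx <| hf.eq_of_isMinOn (fun _ hz => hxy ▸ hfx hz) hfx hy hx
end

theorem ConvexOn.add_deriv_mul_sub_le {S : Set ℝ} {f : ℝ → ℝ} {x y : ℝ} (hf : ConvexOn ℝ S f)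
    (hx : x ∈ S) (hy : y ∈ S) (hfx : DifferentiableAt ℝ f x) :
    f x + deriv f x * (y - x) ≤ f y := by
  rcases lt_trichotomy x y with hxy | rfl | hyx
  · have := hf.deriv_le_slope hx hy hxy hfx
    rw [slope_def_field, le_div_iff₀ (sub_pos.2 hxy)] at this
    linarith
  · simp
  · have := hf.slope_le_deriv hy hx hyx hfx
    rw [slope_def_field, div_le_iff₀ (sub_pos.2 hyx)] at this
    linarith

theorem ConvexOn.isMinOn_comp_sub_add {g h : ℝ → ℝ} {r γ₀ : ℝ} (hg : ConvexOn ℝ univ g)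
    (hgd : DifferentiableAt ℝ g (r - γ₀))
    (hsub : ∀ γ, h γ₀ + deriv g (r - γ₀) * (γ - γ₀) ≤ h γ) :
    IsMinOn (fun γ => g (r - γ) + h γ) univ γ₀ := isMinOn_univ_iff.2 fun γ => by
  have := hg.add_deriv_mul_sub_le (mem_univ _) (mem_univ (r - γ)) hgd
  linarith [hsub γ]

theorem mul_abs_add_mul_sub_le {lam d γ₀ : ℝ} (hd : |d| ≤ lam) (hdγ₀ : d * γ₀ = lam * |γ₀|)
    (γ : ℝ) : lam * |γ₀| + d * (γ - γ₀) ≤ lam * |γ| :=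
  calc lam * |γ₀| + d * (γ - γ₀) = d * γ := by rw [← hdγ₀]; ring
    _ ≤ |d| * |γ| := by rw [← abs_mul]; exact le_abs_self _
    _ ≤ lam * |γ| := by gcongr

theorem strictConvexOn_comp_sub_add_mul_abs {g : ℝ → ℝ} (hg : StrictConvexOn ℝ univ g) (r : ℝ)
    {lam : ℝ} (hlam : 0 ≤ lam) : StrictConvexOn ℝ univ (fun γ => g (r - γ) + lam * |γ|) := by
  have hsub : StrictConvexOn ℝ univ (fun γ => g (r - γ)) := by
    simpa [Function.comp_def, vsub_eq_sub] using
      hg.comp_affineMap (AffineEquiv.constVSub ℝ r).toAffineMap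
        (AffineEquiv.constVSub ℝ r).injective
  have habs : ConvexOn ℝ univ (fun γ : ℝ => lam * |γ|) := by
    simpa [Real.norm_eq_abs, smul_eq_mul] using convexOn_univ_norm.smul (E := ℝ) hlam
  exact hsub.add_convexOn habs

theorem location_family_minimizer_general (g : ℝ → ℝ) (lam : ℝ) (hlam : 0 < lam)
    (hg : Differentiable ℝ g)
    (hconv : StrictConvexOn ℝ Set.univ g)
    (a b : ℝ) (ha : deriv g a = lam) (hb : deriv g b = -lam) (r : ℝ) :
    let γhat := if a < r then r - a else if r < b then r - b else 0
    (∀ γ : ℝ, g (r - γhat) + lam * |γhat| ≤ g (r - γ) + lam * |γ|) ∧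
    (∀ γ : ℝ, γ ≠ γhat → g (r - γhat) + lam * |γhat| < g (r - γ) + lam * |γ|) := by
  intro γhat
  have hmono : Monotone (deriv g) := fun x y hxy =>
    hconv.convexOn.monotoneOn_deriv (fun x _ => hg x) (mem_univ x) (mem_univ y) hxy
  have hsubgrad : |deriv g (r - γhat)| ≤ lam ∧ deriv g (r - γhat) * γhat = lam * |γhat| := by
    unfold γhat
    split_ifs with har hrb
    · rw [sub_sub_cancel, ha, abs_of_pos hlam, abs_of_pos (sub_pos.2 har)]
      exact ⟨le_rfl, rfl⟩
    · rw [sub_sub_cancel, hb, abs_neg, abs_of_pos hlam, abs_of_neg (sub_neg.2 hrb)]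
      exact ⟨le_rfl, by ring⟩
    · rw [not_lt] at har hrb
      rw [sub_zero, abs_zero, mul_zero, mul_zero, abs_le]
      exact ⟨⟨hb ▸ hmono hrb, ha ▸ hmono har⟩, rfl⟩
  have hmin : IsMinOn (fun γ => g (r - γ) + lam * |γ|) univ γhat :=
    hconv.convexOn.isMinOn_comp_sub_add (hg _) (mul_abs_add_mul_sub_le hsubgrad.1 hsubgrad.2)
  exact ⟨fun γ => hmin (mem_univ γ), fun γ hγ =>
    (strictConvexOn_comp_sub_add_mul_abs hconv r hlam.le).lt_of_isMinOn hmin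
      (mem_univ _) (mem_univ _) hγ⟩

/-- Location-family proposition: for `g` differentiable, strictly convex with minimum at 0,
with derivative tending to `±∞`, the unique minimizer of `γ ↦ g(r - γ) + λ|γ|` is given by
soft-thresholding relative to `a = (g')⁻¹(λ)` and `b = (g')⁻¹(-λ)`. -/
theorem location_family_minimizer (g : ℝ → ℝ) (lam : ℝ) (hlam : 0 < lam)
    (hg : Differentiable ℝ g)
    (hconv : StrictConvexOn ℝ Set.univ g)
    (hmin : ∀ x : ℝ, g 0 ≤ g x)
    (htop : Filter.Tendsto (deriv g) Filter.atTop Filter.atTop)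
    (hbot : Filter.Tendsto (deriv g) Filter.atBot Filter.atBot)
    (a b : ℝ) (ha : deriv g a = lam) (hb : deriv g b = -lam) (r : ℝ) :
    let γhat := if a < r then r - a else if r < b then r - b else 0
    (∀ γ : ℝ, g (r - γhat) + lam * |γhat| ≤ g (r - γ) + lam * |γ|) ∧
    (∀ γ : ℝ, γ ≠ γhat → g (r - γhat) + lam * |γhat| < g (r - γ) + lam * |γ|) :=
  location_family_minimizer_general g lam hlam hg hconv a b ha hb r
end

section
/- Fix q ∈ (0,1) and λ > 0. Let ρ_q(r) = qr for r ≥ 0 and ρ_q(r) = (q-1)r for r < 0 be the check loss, and let J₂(γ) = (q/(1-q))(γ₊)² + ((1-q)/q)(γ₋)² be the asymmetric quadratic penalty, where γ₊ = max(γ,0), γ₋ = max(-γ,0). Then for any r ∈ ℝ, the minimizer of γ ↦ ρ_q(r - γ) + (λ/2)J₂(γ) equals -q/λ if r < -q/λ, equals r if -q/λ ≤ r < (1-q)/λ, and equals (1-q)/λ if r ≥ (1-q)/λ. -/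
/-- The check loss `ρ_q`. -/
noncomputable def checkLoss (q r : ℝ) : ℝ := if 0 ≤ r then q * r else (q - 1) * r

/-- The asymmetric quadratic penalty `J₂`. -/
noncomputable def asymPenalty (q γ : ℝ) : ℝ :=
  (q / (1 - q)) * (max γ 0)^2 + ((1 - q) / q) * (max (-γ) 0)^2

/-!
The objective `γ ↦ ρ_q(r - γ) + (λ/2) J₂(γ)` is the sum of the convex check loss and a strictly
convex, differentiable penalty whose derivative is `λ (q/(1-q) γ₊ - (1-q)/q γ₋)`. Hence `γ̂` is the
unique minimizer as soon as this derivative at `γ̂` is a subgradient of `ρ_q` at `r - γ̂`. The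
subdifferential of `ρ_q` is `{q}` on positive arguments, `{q - 1}` on negative ones and `[q - 1, q]`
at `0`; the three branches of `γ̂` are exactly where the derivative equals `q - 1`, lies in
`[q - 1, q]` with `γ̂ = r`, or equals `q`.
-/

open Set

lemma checkLoss_eq_max (q x : ℝ) : checkLoss q x = max (q * x) ((q - 1) * x) := by
  unfold checkLoss
  split_ifs with hx
  · exact (max_eq_left (by nlinarith)).symm
  · exact (max_eq_right (by nlinarith)).symm

lemma mul_le_checkLoss {q s : ℝ} (hs : s ∈ Icc (q - 1) q) (x : ℝ) : s * x ≤ checkLoss q x := by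
  rw [checkLoss_eq_max]
  rcases le_total 0 x with hx | hx
  · exact le_max_of_le_left (mul_le_mul_of_nonneg_right hs.2 hx)
  · exact le_max_of_le_right (mul_le_mul_of_nonpos_right hs.1 hx)

lemma checkLoss_subgradient {q s y : ℝ} (hs : s ∈ Icc (q - 1) q) (hy : s * y = checkLoss q y)
    (x : ℝ) : checkLoss q y + s * (x - y) ≤ checkLoss q x := by
  linarith [mul_le_checkLoss hs x]

lemma asymQuad_tangent_lt {a b γ₀ γ : ℝ} (ha : 0 < a) (hb : 0 < b) (h : γ ≠ γ₀) :
    a * (max γ₀ 0) ^ 2 + b * (max (-γ₀) 0) ^ 2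
        + 2 * (a * max γ₀ 0 - b * max (-γ₀) 0) * (γ - γ₀)
      < a * (max γ 0) ^ 2 + b * (max (-γ) 0) ^ 2 := by
  have hsq : 0 < (γ - γ₀) ^ 2 := sq_pos_of_ne_zero (sub_ne_zero.2 h)
  rcases le_total 0 γ₀ with h₀ | h₀ <;> rcases le_total 0 γ with h₁ | h₁
  · simp only [max_eq_left h₀, max_eq_left h₁, max_eq_right (neg_nonpos.2 h₀),
      max_eq_right (neg_nonpos.2 h₁)]
    nlinarith
  · simp only [max_eq_left h₀, max_eq_right h₁, max_eq_right (neg_nonpos.2 h₀),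
      max_eq_left (neg_nonneg.2 h₁)]
    have hcross : 0 ≤ a * (γ₀ * -γ) := mul_nonneg ha.le (mul_nonneg h₀ (neg_nonneg.2 h₁))
    rcases eq_or_ne γ 0 with rfl | hγ
    · nlinarith [sq_pos_of_ne_zero h.symm]
    · nlinarith [sq_pos_of_ne_zero hγ]
  · simp only [max_eq_right h₀, max_eq_left h₁, max_eq_left (neg_nonneg.2 h₀),
      max_eq_right (neg_nonpos.2 h₁)]
    have hcross : 0 ≤ b * (γ * -γ₀) := mul_nonneg hb.le (mul_nonneg h₁ (neg_nonneg.2 h₀))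
    rcases eq_or_ne γ₀ 0 with rfl | hγ₀
    · nlinarith [sq_pos_of_ne_zero h]
    · nlinarith [sq_pos_of_ne_zero hγ₀]
  · simp only [max_eq_right h₀, max_eq_right h₁, max_eq_left (neg_nonneg.2 h₀),
      max_eq_left (neg_nonneg.2 h₁)]
    nlinarith

noncomputable def adjustedLoss (q lam r γ : ℝ) : ℝ :=
  checkLoss q (r - γ) + (lam / 2) * asymPenalty q γ

lemma adjustedLoss_lt_of_subgradient {q lam r s γ₀ γ : ℝ} (hq : q ∈ Ioo 0 1) (hlam : 0 < lam)
    (hs : s ∈ Icc (q - 1) q) (hsub : s * (r - γ₀) = checkLoss q (r - γ₀))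
    (hstat : s = lam * (q / (1 - q) * max γ₀ 0 - (1 - q) / q * max (-γ₀) 0)) (hγ : γ ≠ γ₀) :
    adjustedLoss q lam r γ₀ < adjustedLoss q lam r γ := by
  have hloss := checkLoss_subgradient hs hsub (r - γ)
  have hpen := mul_lt_mul_of_pos_left
    (asymQuad_tangent_lt (div_pos hq.1 (sub_pos.2 hq.2)) (div_pos (sub_pos.2 hq.2) hq.1) hγ)
    (half_pos hlam)
  unfold adjustedLoss asymPenalty
  rw [hstat] at hloss
  linarith

noncomputable def quantileAdjustment (q lam r : ℝ) : ℝ :=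
  if r < -q / lam then -q / lam else if r < (1 - q) / lam then r else (1 - q) / lam

lemma exists_subgradient_quantileAdjustment {q lam r : ℝ} (hq : q ∈ Ioo 0 1) (hlam : 0 < lam) :
    ∃ s ∈ Icc (q - 1) q,
      s * (r - quantileAdjustment q lam r) = checkLoss q (r - quantileAdjustment q lam r) ∧
      s = lam * (q / (1 - q) * max (quantileAdjustment q lam r) 0
        - (1 - q) / q * max (-quantileAdjustment q lam r) 0) := by
  obtain ⟨hq₀, hq₁⟩ := hq
  have hq₁' : 0 < 1 - q := sub_pos.2 hq₁
  unfold quantileAdjustment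
  split_ifs with hlow hhigh
  · refine ⟨q - 1, ⟨le_rfl, by linarith⟩, ?_, ?_⟩
    · rw [checkLoss, if_neg (by linarith)]
    · have : -q / lam < 0 := div_neg_of_neg_of_pos (neg_neg_of_pos hq₀) hlam
      rw [max_eq_right this.le, max_eq_left (by linarith)]
      field_simp
      ring
  · have hlow' : -q ≤ lam * r := by rwa [not_lt, div_le_iff₀ hlam, mul_comm] at hlow
    have hhigh' : lam * r < 1 - q := by rwa [lt_div_iff₀ hlam, mul_comm] at hhigh
    refine ⟨_, ?_, by simp [checkLoss], rfl⟩
    rcases le_total 0 r with hr | hr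
    · rw [max_eq_left hr, max_eq_right (neg_nonpos.2 hr),
        show lam * (q / (1 - q) * r - (1 - q) / q * 0) = q / (1 - q) * (lam * r) by ring]
      constructor
      · exact (by linarith : q - 1 ≤ 0).trans
          (mul_nonneg (div_pos hq₀ hq₁').le (mul_nonneg hlam.le hr))
      · calc q / (1 - q) * (lam * r) ≤ q / (1 - q) * (1 - q) := by gcongr
          _ = q := div_mul_cancel₀ q hq₁'.ne'
    · rw [max_eq_right hr, max_eq_left (neg_nonneg.2 hr),
        show lam * (q / (1 - q) * 0 - (1 - q) / q * -r) = (1 - q) / q * (lam * r) by ring]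
      constructor
      · calc q - 1 = (1 - q) / q * -q := by field_simp; ring
          _ ≤ (1 - q) / q * (lam * r) := by gcongr
      · exact (mul_nonpos_of_nonneg_of_nonpos (div_pos hq₁' hq₀).le
          (mul_nonpos_of_nonneg_of_nonpos hlam.le hr)).trans hq₀.le
  · refine ⟨q, ⟨by linarith, le_rfl⟩, ?_, ?_⟩
    · rw [checkLoss, if_pos (by linarith)]
    · have : 0 < (1 - q) / lam := div_pos hq₁' hlam
      rw [max_eq_left this.le, max_eq_right (by linarith)]
      field_simp
      ring

/-- The minimizer of `γ ↦ ρ_q(r - γ) + (λ/2)J₂(γ)`. -/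
theorem quantile_adjusted_minimizer (q lam r : ℝ) (hq : q ∈ Set.Ioo (0:ℝ) 1)
    (hlam : 0 < lam) :
    let γhat := if r < -q / lam then -q / lam
      else if r < (1 - q) / lam then r else (1 - q) / lam
    (∀ γ : ℝ, checkLoss q (r - γhat) + (lam / 2) * asymPenalty q γhat ≤
        checkLoss q (r - γ) + (lam / 2) * asymPenalty q γ) ∧
    (∀ γ : ℝ, γ ≠ γhat → checkLoss q (r - γhat) + (lam / 2) * asymPenalty q γhat <
        checkLoss q (r - γ) + (lam / 2) * asymPenalty q γ) := by
  show (∀ γ, adjustedLoss q lam r (quantileAdjustment q lam r) ≤ adjustedLoss q lam r γ) ∧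
    ∀ γ, γ ≠ quantileAdjustment q lam r →
      adjustedLoss q lam r (quantileAdjustment q lam r) < adjustedLoss q lam r γ
  obtain ⟨s, hs, hsub, hstat⟩ := exists_subgradient_quantileAdjustment (r := r) hq hlam
  have hstrict := fun γ (hγ : γ ≠ quantileAdjustment q lam r) =>
    adjustedLoss_lt_of_subgradient hq hlam hs hsub hstat hγ
  refine ⟨fun γ => ?_, hstrict⟩
  rcases eq_or_ne γ (quantileAdjustment q lam r) with rfl | hγ
  · exact le_rfl
  · exact (hstrict γ hγ).le
end

section
/- Let U be a real random variable with q-th quantile 0 whose density is constant on the interval [-q/λ, (1-q)/λ] (for some q ∈ (0,1), λ > 0). Then E[ψ_q^γ(U)] = 0, where ψ_q^γ is the derivative of the effective quantile loss; i.e., the quantile remains the zero of the effective ψ-function. -/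
/-!
With `a = q/λ` and `b = (1-q)/λ`, `ψ_q^γ(x) = q - 1{x < 0} + (1-q) rampUp a x - q rampDown b x`.
The first part has mean `q - P(U < 0) = 0`. The ramps live where the density is the constant `c`,
so they contribute `c (1-q) a / 2` and `c q b / 2`, which are equal since `(1-q) a = q b`.
-/

open MeasureTheory Set
open scoped ENNReal

/-- The derivative `ψ_q^γ` of the effective quantile loss. -/
noncomputable def effCheckPsi (q lam r : ℝ) : ℝ :=
  if r < -q / lam then q - 1
  else if r < 0 then lam * ((1 - q) / q) * r
  else if r < (1 - q) / lam then lam * (q / (1 - q)) * r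
  else q

theorem MeasureTheory.restrict_withDensity_eq_smul_of_eqOn {X : Type*} [MeasurableSpace X]
    {ν : Measure X} {ρ : X → ℝ≥0∞} {s : Set X} {c : ℝ≥0∞} (hs : MeasurableSet s)
    (hρ : EqOn ρ (fun _ => c) s) :
    (ν.withDensity ρ).restrict s = c • ν.restrict s := by
  rw [restrict_withDensity hs,
    withDensity_congr_ae ((ae_restrict_iff' hs).2 (Filter.Eventually.of_forall hρ)),
    withDensity_const]

theorem MeasureTheory.integral_indicator_withDensity_of_eqOn {X : Type*} [MeasurableSpace X]
    {ν : Measure X} {ρ : X → ℝ≥0∞} {s : Set X} {c : ℝ≥0∞} (hs : MeasurableSet s)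
    (hρ : EqOn ρ (fun _ => c) s) (g : X → ℝ) :
    ∫ x, s.indicator g x ∂(ν.withDensity ρ) = c.toReal * ∫ x in s, g x ∂ν := by
  rw [integral_indicator hs, restrict_withDensity_eq_smul_of_eqOn hs hρ, integral_smul_measure,
    smul_eq_mul]

noncomputable def rampUp (a : ℝ) : ℝ → ℝ :=
  (Ico (-a) 0).indicator fun x => 1 + x / a

noncomputable def rampDown (b : ℝ) : ℝ → ℝ :=
  (Ico 0 b).indicator fun x => 1 - x / b

section Ramps

variable {ρ : ℝ → ℝ≥0∞} {c : ℝ≥0∞}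

theorem integrable_rampUp (μ : Measure ℝ) [IsLocallyFiniteMeasure μ] (a : ℝ) :
    Integrable (rampUp a) μ :=
  ((Continuous.integrableOn_Icc (by fun_prop)).mono_set Ico_subset_Icc_self).integrable_indicator
    measurableSet_Ico

theorem integrable_rampDown (μ : Measure ℝ) [IsLocallyFiniteMeasure μ] (b : ℝ) :
    Integrable (rampDown b) μ :=
  ((Continuous.integrableOn_Icc (by fun_prop)).mono_set Ico_subset_Icc_self).integrable_indicator
    measurableSet_Ico

theorem integral_rampUp_withDensity {a : ℝ} (ha : 0 < a) (hρ : EqOn ρ (fun _ => c) (Ico (-a) 0)) :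
    ∫ x, rampUp a x ∂(volume.withDensity ρ) = c.toReal * (a / 2) := by
  rw [rampUp, integral_indicator_withDensity_of_eqOn measurableSet_Ico hρ,
    integral_Ico_eq_integral_Ioo, ← integral_Ioc_eq_integral_Ioo,
    ← intervalIntegral.integral_of_le (neg_nonpos.2 ha.le),
    intervalIntegral.integral_add intervalIntegrable_const
      (intervalIntegral.intervalIntegrable_id.div_const a),
    intervalIntegral.integral_const, intervalIntegral.integral_div, integral_id]
  field_simp
  ring

theorem integral_rampDown_withDensity {b : ℝ} (hb : 0 < b) (hρ : EqOn ρ (fun _ => c) (Ico 0 b)) :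
    ∫ x, rampDown b x ∂(volume.withDensity ρ) = c.toReal * (b / 2) := by
  rw [rampDown, integral_indicator_withDensity_of_eqOn measurableSet_Ico hρ,
    integral_Ico_eq_integral_Ioo, ← integral_Ioc_eq_integral_Ioo,
    ← intervalIntegral.integral_of_le hb.le,
    intervalIntegral.integral_sub intervalIntegrable_const
      (intervalIntegral.intervalIntegrable_id.div_const b),
    intervalIntegral.integral_const, intervalIntegral.integral_div, integral_id]
  field_simp
  ring

end Ramps

theorem effCheckPsi_eq_sub_indicator_add_ramps {q lam : ℝ} (hq : q ∈ Ioo 0 1) (hlam : 0 < lam)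
    (x : ℝ) :
    effCheckPsi q lam x = q - (Iio 0).indicator 1 x
      + (1 - q) * rampUp (q / lam) x - q * rampDown ((1 - q) / lam) x := by
  obtain ⟨hq0, hq1⟩ := hq
  have ha : 0 < q / lam := div_pos hq0 hlam
  have hb : 0 < (1 - q) / lam := div_pos (by linarith) hlam
  rw [effCheckPsi, neg_div, rampUp, rampDown]
  rcases lt_or_ge x (-(q / lam)) with h1 | h1
  · have h2 : x < 0 := by linarith
    simp [h1, h2, not_le.2 h1, not_le.2 h2]
  rcases lt_or_ge x 0 with h2 | h2
  · simp only [not_lt.2 h1, ↓reduceIte, h2, mem_Iio, indicator_of_mem, Pi.one_apply, mem_Ico, h1,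
      and_self, not_le.2 h2, false_and, not_false_eq_true, indicator_of_notMem, mul_zero, sub_zero]
    field_simp
    ring
  rcases lt_or_ge x ((1 - q) / lam) with h3 | h3
  · simp only [not_lt.2 h1, ↓reduceIte, not_lt.2 h2, h3, mem_Iio, not_false_eq_true,
      indicator_of_notMem, sub_zero, mem_Ico, h1, and_false, mul_zero, add_zero, h2, and_self,
      indicator_of_mem]
    field_simp
    ring
  · simp [h2, not_lt.2 (hb.le.trans h3), not_lt.2 h3, not_lt.2 ((neg_nonpos.2 ha.le).trans h2)]

theorem integral_effCheckPsi {q lam : ℝ} (hq : q ∈ Ioo 0 1) (hlam : 0 < lam) (μ : Measure ℝ)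
    [IsProbabilityMeasure μ] :
    ∫ x, effCheckPsi q lam x ∂μ = q - μ.real (Iio 0)
      + (1 - q) * ∫ x, rampUp (q / lam) x ∂μ - q * ∫ x, rampDown ((1 - q) / lam) x ∂μ := by
  have hI : Integrable ((Iio 0).indicator (1 : ℝ → ℝ)) μ :=
    (integrable_const 1).indicator measurableSet_Iio
  have hq_sub_I : Integrable (fun x => q - (Iio 0).indicator 1 x) μ := (integrable_const q).sub hI
  simp_rw [effCheckPsi_eq_sub_indicator_add_ramps hq hlam]
  rw [integral_sub, integral_add, integral_sub, integral_const_mul, integral_const_mul,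
    integral_indicator_one measurableSet_Iio, integral_const, probReal_univ, one_smul]
  exacts [integrable_const q, hI, hq_sub_I, (integrable_rampUp μ _).const_mul _,
    hq_sub_I.add ((integrable_rampUp μ _).const_mul _), (integrable_rampDown μ _).const_mul _]

theorem effective_psi_zero_at_quantile_general (q lam : ℝ) (hq : q ∈ Set.Ioo (0:ℝ) 1)
    (hlam : 0 < lam) (f : ℝ → ℝ)
    (μ : Measure ℝ)
    (hμ : μ = MeasureTheory.volume.withDensity (fun x => ENNReal.ofReal (f x)))
    (hprob : IsProbabilityMeasure μ)
    (c : ℝ) (hconst : ∀ x ∈ Set.Icc (-q / lam) ((1 - q) / lam), f x = c)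
    (hquant : μ {x : ℝ | x < 0} = ENNReal.ofReal q) :
    ∫ x, effCheckPsi q lam x ∂μ = 0 := by
  have hmass : μ.real (Iio 0) = q :=
    (congrArg ENNReal.toReal hquant).trans (ENNReal.toReal_ofReal hq.1.le)
  have hdens : EqOn (fun x => ENNReal.ofReal (f x)) (fun _ => ENNReal.ofReal c)
      (Icc (-(q / lam)) ((1 - q) / lam)) := fun x hx =>
    congrArg ENNReal.ofReal (hconst x (by rwa [neg_div]))
  have ha : 0 < q / lam := div_pos hq.1 hlam
  have hb : 0 < (1 - q) / lam := div_pos (sub_pos.2 hq.2) hlam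
  rw [integral_effCheckPsi hq hlam, hmass]
  subst hμ
  rw [integral_rampUp_withDensity ha
      (hdens.mono (Ico_subset_Icc_self.trans (Icc_subset_Icc_right hb.le))),
    integral_rampDown_withDensity hb
      (hdens.mono (Ico_subset_Icc_self.trans (Icc_subset_Icc_left (neg_nonpos.2 ha.le))))]
  field_simp
  ring

/-- If `U` has a density that is constant on `[-q/λ, (1-q)/λ]` and `q`-th quantile `0`
(`P(U < 0) = q`), then `E[ψ_q^γ(U)] = 0`. -/
theorem effective_psi_zero_at_quantile (q lam : ℝ) (hq : q ∈ Set.Ioo (0:ℝ) 1)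
    (hlam : 0 < lam) (f : ℝ → ℝ) (hf : ∀ x, 0 ≤ f x)
    (μ : Measure ℝ)
    (hμ : μ = MeasureTheory.volume.withDensity (fun x => ENNReal.ofReal (f x)))
    (hprob : IsProbabilityMeasure μ)
    (c : ℝ) (hconst : ∀ x ∈ Set.Icc (-q / lam) ((1 - q) / lam), f x = c)
    (hquant : μ {x : ℝ | x < 0} = ENNReal.ofReal q) :
    ∫ x, effCheckPsi q lam x ∂μ = 0 :=
  effective_psi_zero_at_quantile_general q lam hq hlam f μ hμ hprob c hconst hquant
end

section
/- Let g : ℝ → ℝ be convex, monotonically decreasing, and continuously differentiable, and suppose 0 < λ < -lim_{τ→-∞} g'(τ). Then for any τ ∈ ℝ, the minimizer over γ ∈ ℝ of γ ↦ g(τ + γ) + λ|γ| equals (g')⁻¹(-λ) - τ when τ ≤ (g')⁻¹(-λ), and equals 0 when τ > (g')⁻¹(-λ). -/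
/-! Both cases follow from the tangent-line inequality of the convex function `g` at the
candidate point `τ + γhat`. For `τ ≤ a` the tangent at `a` has slope `-lam`, which the
penalty `lam * |γ|` exactly compensates. For `τ > a` the slope `g' τ` lies in `[-lam, 0]`,
since `g'` is monotone and `g` is decreasing, so `lam * |γ|` dominates any first-order gain. -/

open Set

theorem ConvexOn.le_add_mul_abs_sub_of_abs_deriv_le {f : ℝ → ℝ} {x c : ℝ}
    (hf : ConvexOn ℝ univ f) (hfx : DifferentiableAt ℝ f x) (hc : |deriv f x| ≤ c) (y : ℝ) :
    f x ≤ f y + c * |y - x| := by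
  have hlin : -(deriv f x * (y - x)) ≤ c * |y - x| :=
    calc -(deriv f x * (y - x)) ≤ |deriv f x * (y - x)| := neg_le_abs _
      _ = |deriv f x| * |y - x| := abs_mul _ _
      _ ≤ c * |y - x| := mul_le_mul_of_nonneg_right hc (abs_nonneg _)
  linarith [hf.add_deriv_mul_sub_le (mem_univ x) (mem_univ y) hfx]

theorem margin_loss_minimizer_general (g : ℝ → ℝ) (lam : ℝ) (hlam : 0 < lam)
    (hconv : ConvexOn ℝ Set.univ g)
    (hdec : ∀ s t : ℝ, s ≤ t → g t ≤ g s)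
    (hg : Differentiable ℝ g)
    (a : ℝ) (ha : deriv g a = -lam) (τ : ℝ) :
    let γhat := if τ ≤ a then a - τ else 0
    ∀ γ : ℝ, g (τ + γhat) + lam * |γhat| ≤ g (τ + γ) + lam * |γ| := by
  intro γhat γ
  by_cases hτ : τ ≤ a
  · simp only [γhat, if_pos hτ, add_sub_cancel, abs_of_nonneg (sub_nonneg.mpr hτ)]
    have htangent := hconv.add_deriv_mul_sub_le (mem_univ a) (mem_univ (τ + γ)) (hg a)
    rw [ha] at htangent
    calc g a + lam * (a - τ) ≤ g (τ + γ) + lam * (τ + γ - a) + lam * (a - τ) := by linarith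
      _ = g (τ + γ) + lam * γ := by ring
      _ ≤ g (τ + γ) + lam * |γ| := by gcongr; exact le_abs_self γ
  · simp only [γhat, if_neg hτ, add_zero, abs_zero, mul_zero]
    have hderiv_ge : -lam ≤ deriv g τ :=
      ha ▸ hconv.monotoneOn_deriv (fun x _ => hg x) (mem_univ a) (mem_univ τ) (not_le.mp hτ).le
    have hderiv_nonpos : deriv g τ ≤ 0 := Antitone.deriv_nonpos hdec
    simpa using hconv.le_add_mul_abs_sub_of_abs_deriv_le (hg τ)
      (abs_le.mpr ⟨hderiv_ge, by linarith⟩) (τ + γ)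

/-- Margin-based loss proposition: for `g` convex, decreasing and continuously
differentiable, with `0 < λ < -lim_{τ→-∞} g'(τ)`, the minimizer of
`γ ↦ g(τ + γ) + λ|γ|` is `(g')⁻¹(-λ) - τ` when `τ ≤ (g')⁻¹(-λ)` and `0` otherwise. -/
theorem margin_loss_minimizer (g : ℝ → ℝ) (lam : ℝ) (hlam : 0 < lam)
    (hconv : ConvexOn ℝ Set.univ g)
    (hdec : ∀ s t : ℝ, s ≤ t → g t ≤ g s)
    (hg : Differentiable ℝ g) (hderiv : Continuous (deriv g))
    (l : ℝ) (hlim : Filter.Tendsto (deriv g) Filter.atBot (nhds l))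
    (hlt : lam < -l)
    (a : ℝ) (ha : deriv g a = -lam) (τ : ℝ) :
    let γhat := if τ ≤ a then a - τ else 0
    ∀ γ : ℝ, g (τ + γhat) + lam * |γhat| ≤ g (τ + γ) + lam * |γ| :=
  margin_loss_minimizer_general g lam hlam hconv hdec hg a ha τ
end

section
/- For the logistic loss g(τ) = log(1 + e^{-τ}) and 0 < λ < 1, the minimizer over γ ≥ 0 of γ ↦ log(1 + e^{-τ-γ}) + λγ equals log((1-λ)/λ) - τ if τ ≤ log((1-λ)/λ), and 0 otherwise; consequently the γ-adjusted loss equals the truncated deviance log(1 + λ/(1-λ)) when τ ≤ log((1-λ)/λ) and log(1 + e^{-τ}) otherwise. -/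
/-!
The map `u ↦ log (1 + exp u)` is convex with derivative `sigmoid u`, so it lies above its tangent
lines. With `L = log ((1 - λ) / λ)` one has `sigmoid (-L) = λ`. If `τ ≤ L`, the tangent at `-L`
shows that `γ = L - τ`, which puts the margin `τ + γ` at `L`, is optimal. If `τ > L`, the slope
`sigmoid (-τ)` at `γ = 0` is already below `λ`, so the penalty `λ γ` outweighs any decrease of the
loss and `γ = 0` is optimal.
-/

open Real

lemma Real.log_one_add_exp_add_sigmoid_mul_le (u v : ℝ) :
    log (1 + exp u) + sigmoid u * (v - u) ≤ log (1 + exp v) := by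
  have hpos : 0 < 1 + exp u := by positivity
  have hs : sigmoid u = exp u / (1 + exp u) := by
    rw [sigmoid_def, exp_neg]; field_simp; ring
  -- `(1 + exp v) / (1 + exp u)` is the `sigmoid u`-weighted mean of `exp (v - u)` and `exp 0`
  have hconv := convexOn_exp.2 (Set.mem_univ (v - u)) (Set.mem_univ 0)
    (sigmoid_nonneg u) (sub_nonneg.2 (sigmoid_le_one u)) (add_sub_cancel _ _)
  have hratio : sigmoid u • exp (v - u) + (1 - sigmoid u) • exp 0 = (1 + exp v) / (1 + exp u) := by
    rw [smul_eq_mul, smul_eq_mul, hs, exp_zero, exp_sub]; field_simp; ring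
  rw [smul_eq_mul, smul_eq_mul, mul_zero, add_zero, hratio] at hconv
  have hlog := (le_log_iff_exp_le (by positivity)).2 hconv
  rw [log_div (by positivity) hpos.ne'] at hlog
  linarith

lemma Real.sigmoid_neg_log_one_sub_div {p : ℝ} (hp0 : 0 < p) (hp1 : p < 1) :
    sigmoid (-log ((1 - p) / p)) = p := by
  have : 0 < 1 - p := sub_pos.2 hp1
  rw [sigmoid_def, neg_neg, exp_log (by positivity)]
  field_simp
  ring

lemma Real.exp_neg_log_one_sub_div {p : ℝ} (hp0 : 0 < p) (hp1 : p < 1) :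
    exp (-log ((1 - p) / p)) = p / (1 - p) := by
  rw [← log_inv, inv_div, exp_log (div_pos hp0 (sub_pos.2 hp1))]

/-- For the logistic loss, the minimizer over `γ ≥ 0` of
`γ ↦ log(1 + e^{-τ-γ}) + λγ` is `log((1-λ)/λ) - τ` if `τ ≤ log((1-λ)/λ)` and `0`
otherwise, and the `γ`-adjusted loss is the truncated deviance. -/
theorem logistic_adjusted_loss (lam τ : ℝ) (hlam : 0 < lam) (hlam1 : lam < 1) :
    let γhat := if τ ≤ Real.log ((1 - lam) / lam) then Real.log ((1 - lam) / lam) - τ else 0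
    (∀ γ : ℝ, 0 ≤ γ →
      Real.log (1 + Real.exp (-τ - γhat)) + lam * γhat ≤
        Real.log (1 + Real.exp (-τ - γ)) + lam * γ) ∧
    Real.log (1 + Real.exp (-τ - γhat)) =
      (if τ ≤ Real.log ((1 - lam) / lam) then Real.log (1 + lam / (1 - lam))
       else Real.log (1 + Real.exp (-τ))) := by
  intro γhat
  set L := log ((1 - lam) / lam)
  have hslope : sigmoid (-L) = lam := sigmoid_neg_log_one_sub_div hlam hlam1
  by_cases hτ : τ ≤ L
  · have hγhat : γhat = L - τ := if_pos hτ
    have hmargin : -τ - γhat = -L := by rw [hγhat]; ring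
    refine ⟨fun γ _ => ?_, ?_⟩
    · have htangent := log_one_add_exp_add_sigmoid_mul_le (-L) (-τ - γ)
      rw [hslope] at htangent
      rw [hmargin, hγhat]
      linarith
    · rw [if_pos hτ, hmargin, exp_neg_log_one_sub_div hlam hlam1]
  · have hγhat : γhat = 0 := if_neg hτ
    refine ⟨fun γ hγ => ?_, ?_⟩
    · have htangent := log_one_add_exp_add_sigmoid_mul_le (-τ) (-τ - γ)
      have hslope_le : sigmoid (-τ) * γ ≤ lam * γ :=
        mul_le_mul_of_nonneg_right (hslope ▸ sigmoid_le (by linarith)) hγ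
      rw [hγhat, sub_zero, mul_zero, add_zero]
      linarith
    · rw [if_neg hτ, hγhat, sub_zero]
end
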